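/- For the Korányi distance d(x,x₀) = ‖x₀⁻¹·x‖_K on the Heisenberg group, the horizontal gradient has norm ‖∇₀ d(·,x₀)‖(x) = P^{1/2}/(P² + 16Q²)^{1/4} ≤ 1, where P = (x₁-a₁)² + (x₂-a₂)² and Q = x₃ - a₃ - (a₁x₂)/2 + (a₂x₁)/2, for x₀ = (a₁,a₂,a₃) and all x with d(x,x₀) > 0. -/

import Mathlib

/-- The Heisenberg horizontal vector field `X₁ = ∂_{x₁} - (x₂/2)∂_{x₃}`. -/
noncomputable def X1 (f : ℝ × ℝ × ℝ → ℝ) (x : ℝ × ℝ × ℝ) : ℝ :=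
  deriv (fun t => f (t, x.2.1, x.2.2)) x.1
    - x.2.1 / 2 * deriv (fun t => f (x.1, x.2.1, t)) x.2.2

/-- The Heisenberg horizontal vector field `X₂ = ∂_{x₂} + (x₁/2)∂_{x₃}`. -/
noncomputable def X2 (f : ℝ × ℝ × ℝ → ℝ) (x : ℝ × ℝ × ℝ) : ℝ :=
  deriv (fun t => f (x.1, t, x.2.2)) x.2.1
    + x.1 / 2 * deriv (fun t => f (x.1, x.2.1, t)) x.2.2

/-- The Heisenberg group multiplication on `ℝ³`. -/
noncomputable def hmul (x y : ℝ × ℝ × ℝ) : ℝ × ℝ × ℝ :=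
  (x.1 + y.1, x.2.1 + y.2.1, x.2.2 + y.2.2 + (x.1 * y.2.1 - y.1 * x.2.1) / 2)

/-- The Heisenberg group inverse. -/
def hinv (x : ℝ × ℝ × ℝ) : ℝ × ℝ × ℝ := (-x.1, -x.2.1, -x.2.2)

/-- The Korányi quasi-norm on `ℍ¹ = ℝ³`. -/
noncomputable def knorm (x : ℝ × ℝ × ℝ) : ℝ :=
  ((x.1 ^ 2 + x.2.1 ^ 2) ^ 2 + 16 * x.2.2 ^ 2) ^ ((1 : ℝ) / 4)

/-- The Korányi distance `d(x,x₀) = ‖x₀⁻¹·x‖_K`. -/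
noncomputable def kdist (x x0 : ℝ × ℝ × ℝ) : ℝ := knorm (hmul (hinv x0) x)

/-! The horizontal fields `X₁, X₂` are left-invariant and `z ↦ x₀⁻¹·z` is affine, so the
horizontal gradient of `d(·, x₀)` at `x` is that of `‖·‖_K` at `y = x₀⁻¹·x = (x₁ - a₁, x₂ - a₂, Q)`.
Writing `‖y‖_K⁴ = |y'|⁴ + 16 y₃²` with `y' = (y₁, y₂)`, the chain rule gives
`X₁‖·‖_K(y) = (|y'|² y₁ - 4 y₂ y₃) / ‖y‖_K³` and `X₂‖·‖_K(y) = (|y'|² y₂ + 4 y₁ y₃) / ‖y‖_K³`,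
whose squares add up to `|y'|² ‖y‖_K⁴ / ‖y‖_K⁶`. The bound is `|y'|⁴ ≤ ‖y‖_K⁴`. -/

open Real

section LineDerivative

variable {E F : Type*} [NormedAddCommGroup E] [NormedSpace ℝ E]
  [NormedAddCommGroup F] [NormedSpace ℝ F]

theorem deriv_comp_line {f : E → F} {x : E} (hf : DifferentiableAt ℝ f x) (v : E) (s : ℝ) :
    deriv (fun t => f (x + (t - s) • v)) s = fderiv ℝ f x v := by
  have hline : HasDerivAt (fun t : ℝ => x + (t - s) • v) ((1 : ℝ) • v) s :=
    (((hasDerivAt_id s).sub_const s).smul_const v).const_add x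
  rw [one_smul] at hline
  exact (hf.hasFDerivAt.comp_hasDerivAt_of_eq s hline (by simp)).deriv

end LineDerivative

section HorizontalFields

variable {f g : ℝ × ℝ × ℝ → ℝ} {x : ℝ × ℝ × ℝ}

theorem X1_eq_fderiv (hf : DifferentiableAt ℝ f x) :
    X1 f x = fderiv ℝ f x (1, 0, -(x.2.1 / 2)) := by
  have h₁ : (fun t => f (t, x.2.1, x.2.2)) = fun t => f (x + (t - x.1) • (1, 0, 0)) := by
    ext t; congr 1; ext <;> simp
  have h₃ : (fun t => f (x.1, x.2.1, t)) = fun t => f (x + (t - x.2.2) • (0, 0, 1)) := by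
    ext t; congr 1; ext <;> simp
  have hv : ((1 : ℝ), (0 : ℝ), -(x.2.1 / 2)) = (1, 0, 0) - (x.2.1 / 2) • (0, 0, 1) := by
    ext <;> simp
  rw [X1, h₁, h₃, deriv_comp_line hf, deriv_comp_line hf, hv, map_sub, map_smul, smul_eq_mul]

theorem X2_eq_fderiv (hf : DifferentiableAt ℝ f x) :
    X2 f x = fderiv ℝ f x (0, 1, x.1 / 2) := by
  have h₂ : (fun t => f (x.1, t, x.2.2)) = fun t => f (x + (t - x.2.1) • (0, 1, 0)) := by
    ext t; congr 1; ext <;> simp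
  have h₃ : (fun t => f (x.1, x.2.1, t)) = fun t => f (x + (t - x.2.2) • (0, 0, 1)) := by
    ext t; congr 1; ext <;> simp
  have hv : ((0 : ℝ), (1 : ℝ), x.1 / 2) = (0, 1, 0) + (x.1 / 2) • (0, 0, 1) := by
    ext <;> simp
  rw [X2, h₂, h₃, deriv_comp_line hf, deriv_comp_line hf, hv, map_add, map_smul, smul_eq_mul]

theorem differentiable_hmul (a : ℝ × ℝ × ℝ) : Differentiable ℝ (hmul a) := by
  unfold hmul; fun_prop

theorem X1_comp_hmul {a : ℝ × ℝ × ℝ} (hf : DifferentiableAt ℝ f (hmul a x)) :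
    X1 (fun z => f (hmul a z)) x = X1 f (hmul a x) := by
  have hfa : DifferentiableAt ℝ (fun z => f (hmul a z)) x := hf.comp x (differentiable_hmul a x)
  rw [X1_eq_fderiv hfa, ← deriv_comp_line hfa _ 0, X1_eq_fderiv hf, ← deriv_comp_line hf _ 0]
  congr 1; ext t; congr 1
  ext <;> simp only [hmul, sub_zero, Prod.smul_mk, smul_eq_mul, mul_one, mul_zero,
    Prod.fst_add, Prod.snd_add, Prod.mk_add_mk, add_zero] <;> ring

theorem X2_comp_hmul {a : ℝ × ℝ × ℝ} (hf : DifferentiableAt ℝ f (hmul a x)) :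
    X2 (fun z => f (hmul a z)) x = X2 f (hmul a x) := by
  have hfa : DifferentiableAt ℝ (fun z => f (hmul a z)) x := hf.comp x (differentiable_hmul a x)
  rw [X2_eq_fderiv hfa, ← deriv_comp_line hfa _ 0, X2_eq_fderiv hf, ← deriv_comp_line hf _ 0]
  congr 1; ext t; congr 1
  ext <;> simp only [hmul, sub_zero, Prod.smul_mk, smul_eq_mul, mul_one, mul_zero,
    Prod.fst_add, Prod.snd_add, Prod.mk_add_mk, add_zero] <;> ring

theorem X1_rpow_const (hg : DifferentiableAt ℝ g x) (hgx : g x ≠ 0) (p : ℝ) :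
    X1 (fun z => g z ^ p) x = p * g x ^ (p - 1) * X1 g x := by
  rw [X1_eq_fderiv (hg.rpow_const (Or.inl hgx)), X1_eq_fderiv hg,
    (hg.hasFDerivAt.rpow_const (Or.inl hgx)).fderiv]
  rfl

theorem X2_rpow_const (hg : DifferentiableAt ℝ g x) (hgx : g x ≠ 0) (p : ℝ) :
    X2 (fun z => g z ^ p) x = p * g x ^ (p - 1) * X2 g x := by
  rw [X2_eq_fderiv (hg.rpow_const (Or.inl hgx)), X2_eq_fderiv hg,
    (hg.hasFDerivAt.rpow_const (Or.inl hgx)).fderiv]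
  rfl

end HorizontalFields

section KoranyiNorm

def knorm4 (y : ℝ × ℝ × ℝ) : ℝ := (y.1 ^ 2 + y.2.1 ^ 2) ^ 2 + 16 * y.2.2 ^ 2

variable {y : ℝ × ℝ × ℝ}

theorem knorm_nonneg (y : ℝ × ℝ × ℝ) : 0 ≤ knorm y := by
  unfold knorm; positivity

theorem knorm_pow_four (y : ℝ × ℝ × ℝ) : knorm y ^ 4 = knorm4 y := by
  rw [knorm, ← rpow_natCast, ← rpow_mul (by positivity)]
  norm_num [knorm4]

theorem knorm4_pos (hy : 0 < knorm y) : 0 < knorm4 y :=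
  knorm_pow_four y ▸ pow_pos hy 4

theorem sqrt_le_knorm (y : ℝ × ℝ × ℝ) : √(y.1 ^ 2 + y.2.1 ^ 2) ≤ knorm y := by
  rw [← pow_le_pow_iff_left₀ (sqrt_nonneg _) (knorm_nonneg y) (by norm_num : 4 ≠ 0),
    knorm_pow_four, knorm4, show 4 = 2 * 2 from rfl, pow_mul, sq_sqrt (by positivity)]
  nlinarith [sq_nonneg y.2.2]

theorem differentiable_knorm4 : Differentiable ℝ knorm4 := by
  unfold knorm4; fun_prop

theorem differentiableAt_knorm (hy : 0 < knorm y) : DifferentiableAt ℝ knorm y :=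
  (differentiable_knorm4 y).rpow_const (Or.inl (knorm4_pos hy).ne')

theorem X1_knorm4 (y : ℝ × ℝ × ℝ) :
    X1 knorm4 y = 4 * ((y.1 ^ 2 + y.2.1 ^ 2) * y.1 - 4 * y.2.1 * y.2.2) := by
  simp only [X1, knorm4, deriv_add_const', differentiableAt_add_const_iff,
    differentiableAt_fun_id, DifferentiableAt.fun_pow, deriv_fun_pow, Nat.cast_ofNat,
    Nat.add_one_sub_one, pow_one, differentiableAt_const, deriv_fun_add, deriv_id'', mul_one,
    deriv_const', mul_zero, add_zero, deriv_const_add', deriv_fun_mul, zero_mul]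
  ring

theorem X2_knorm4 (y : ℝ × ℝ × ℝ) :
    X2 knorm4 y = 4 * ((y.1 ^ 2 + y.2.1 ^ 2) * y.2.1 + 4 * y.1 * y.2.2) := by
  simp only [X2, knorm4, deriv_add_const', differentiableAt_const, differentiableAt_const_add_iff,
    differentiableAt_fun_id, DifferentiableAt.fun_pow, deriv_fun_pow, Nat.cast_ofNat,
    Nat.add_one_sub_one, pow_one, deriv_fun_add, deriv_const', mul_zero, deriv_id'', mul_one,
    zero_add, deriv_const_add', deriv_fun_mul, zero_mul]
  ring

theorem knorm4_rpow_quarter_sub_one (hy : 0 < knorm y) :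
    knorm4 y ^ ((1 : ℝ) / 4 - 1) = knorm y / knorm y ^ 4 := by
  rw [rpow_sub (knorm4_pos hy), rpow_one, knorm_pow_four]
  rfl

theorem X1_knorm (hy : 0 < knorm y) :
    X1 knorm y = ((y.1 ^ 2 + y.2.1 ^ 2) * y.1 - 4 * y.2.1 * y.2.2) / knorm y ^ 3 := by
  change X1 (fun z => knorm4 z ^ ((1 : ℝ) / 4)) y = _
  rw [X1_rpow_const (differentiable_knorm4 y) (knorm4_pos hy).ne', X1_knorm4,
    knorm4_rpow_quarter_sub_one hy]
  field_simp

theorem X2_knorm (hy : 0 < knorm y) :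
    X2 knorm y = ((y.1 ^ 2 + y.2.1 ^ 2) * y.2.1 + 4 * y.1 * y.2.2) / knorm y ^ 3 := by
  change X2 (fun z => knorm4 z ^ ((1 : ℝ) / 4)) y = _
  rw [X2_rpow_const (differentiable_knorm4 y) (knorm4_pos hy).ne', X2_knorm4,
    knorm4_rpow_quarter_sub_one hy]
  field_simp

theorem sqrt_X1_knorm_sq_add_X2_knorm_sq (hy : 0 < knorm y) :
    √(X1 knorm y ^ 2 + X2 knorm y ^ 2) = √(y.1 ^ 2 + y.2.1 ^ 2) / knorm y := by
  have hsum : X1 knorm y ^ 2 + X2 knorm y ^ 2 = (y.1 ^ 2 + y.2.1 ^ 2) / knorm y ^ 2 := by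
    rw [X1_knorm hy, X2_knorm hy]
    field_simp
    rw [knorm_pow_four, knorm4]
    ring
  rw [hsum, sqrt_div' _ (sq_nonneg _), sqrt_sq (knorm_nonneg y)]

end KoranyiNorm

theorem hmul_hinv_eq (x0 x : ℝ × ℝ × ℝ) :
    hmul (hinv x0) x = (x.1 - x0.1, x.2.1 - x0.2.1,
      x.2.2 - x0.2.2 - x0.1 * x.2.1 / 2 + x0.2.1 * x.1 / 2) := by
  ext <;> simp only [hmul, hinv] <;> ring

/-- The horizontal gradient of the Korányi distance has norm
`P^{1/2}/(P²+16Q²)^{1/4} ≤ 1`. -/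
theorem horizontal_gradient_koranyi_distance (x0 x : ℝ × ℝ × ℝ)
    (hx : 0 < kdist x x0) :
    let P := (x.1 - x0.1) ^ 2 + (x.2.1 - x0.2.1) ^ 2
    let Q := x.2.2 - x0.2.2 - x0.1 * x.2.1 / 2 + x0.2.1 * x.1 / 2
    Real.sqrt ((X1 (fun z => kdist z x0) x) ^ 2 + (X2 (fun z => kdist z x0) x) ^ 2)
        = Real.sqrt P / (P ^ 2 + 16 * Q ^ 2) ^ ((1 : ℝ) / 4) ∧
    Real.sqrt P / (P ^ 2 + 16 * Q ^ 2) ^ ((1 : ℝ) / 4) ≤ 1 := by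
  intro P Q
  have hy : hmul (hinv x0) x = (x.1 - x0.1, x.2.1 - x0.2.1, Q) := hmul_hinv_eq x0 x
  have hP : P = (hmul (hinv x0) x).1 ^ 2 + (hmul (hinv x0) x).2.1 ^ 2 := by rw [hy]
  have hK : (P ^ 2 + 16 * Q ^ 2) ^ ((1 : ℝ) / 4) = knorm (hmul (hinv x0) x) := by rw [hy]; rfl
  rw [hK, hP]
  refine ⟨?_, div_le_one_of_le₀ (sqrt_le_knorm _) (knorm_nonneg _)⟩
  have hd : DifferentiableAt ℝ knorm (hmul (hinv x0) x) := differentiableAt_knorm hx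
  simp only [kdist]
  rw [X1_comp_hmul hd, X2_comp_hmul hd, sqrt_X1_knorm_sq_add_X2_knorm_sq hx]
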